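/- If k ≥ 3 is odd, then for all x_1,…,x_k ∈ H_n one has the equality ∑_{i=1}^k m(x_1,…,x_{i-1},x_{i+1},…,x_k) = (k-1) · m(x_1,…,x_k), where the i-th summand is the inertia of the (k-1)-tuple obtained by deleting x_i. In particular, for k = 3: m(x_1,x_2) + m(x_2,x_3) + m(x_3,x_1) = 2 · m(x_1,x_2,x_3). -/

import Mathlib

/-- The inertia of a `k`-tuple of points of `H_n`: `min_y ∑ᵢ d(y, xᵢ)`
(the average radius is the inertia divided by `k`). -/
def inertia {n k : ℕ} (x : Fin k → Fin n → ZMod 2) : ℕ :=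
  Finset.inf' Finset.univ Finset.univ_nonempty
    (fun y : Fin n → ZMod 2 => ∑ i, hammingDist y (x i))

/-!
The inertia splits over the coordinates: in coordinate `c` the best choice of `y c` is the
majority value among the `x i c`, which costs the size of the minority. So it suffices to prove
the identity for a single column `v` of `k = m + 1` bits, with `a` zeros and `b` ones. Deleting a
zero leaves minority `min (a - 1) b`, deleting a one leaves `min a (b - 1)`. As `k` is odd,
`a ≠ b`; if, say, `a < b`, the sum is `a (a - 1) + b a = (a + b - 1) a = m · min a b`.
-/

open Finset

def minorityCount {ι : Type*} [Fintype ι] (v : ι → ZMod 2) : ℕ :=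
  min #{i | v i = 0} #{i | v i = 1}

theorem sum_hammingDist_eq_sum_card_ne {ι κ : Type*} {β : κ → Type*} [Fintype ι] [Fintype κ]
    [∀ c, DecidableEq (β c)] (y : ∀ c, β c) (x : ι → ∀ c, β c) :
    ∑ i, hammingDist y (x i) = ∑ c, #{i | x i c ≠ y c} := by
  simp only [hammingDist, card_filter, ne_comm (a := y _)]
  exact sum_comm

namespace ZMod

theorem eq_zero_or_eq_one (a : ZMod 2) : a = 0 ∨ a = 1 := by
  revert a; decide

theorem card_filter_ne_zero {ι : Type*} [Fintype ι] (v : ι → ZMod 2) :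
    #{i | v i ≠ 0} = #{i | v i = 1} := by
  congr 1
  exact filter_congr fun i _ => by rcases eq_zero_or_eq_one (v i) with h | h <;> simp [h]

theorem card_filter_ne_one {ι : Type*} [Fintype ι] (v : ι → ZMod 2) :
    #{i | v i ≠ 1} = #{i | v i = 0} := by
  congr 1
  exact filter_congr fun i _ => by rcases eq_zero_or_eq_one (v i) with h | h <;> simp [h]

end ZMod

section minorityCount

variable {ι : Type*} [Fintype ι]

theorem minorityCount_le_card_filter_ne (v : ι → ZMod 2) (b : ZMod 2) :
    minorityCount v ≤ #{i | v i ≠ b} := by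
  rcases ZMod.eq_zero_or_eq_one b with rfl | rfl
  · exact (min_le_right _ _).trans (ZMod.card_filter_ne_zero v).ge
  · exact (min_le_left _ _).trans (ZMod.card_filter_ne_one v).ge

theorem exists_card_filter_ne_eq_minorityCount (v : ι → ZMod 2) :
    ∃ b : ZMod 2, #{i | v i ≠ b} = minorityCount v := by
  rcases le_total #{i | v i = 0} #{i | v i = 1} with h | h
  · exact ⟨1, (ZMod.card_filter_ne_one v).trans (min_eq_left h).symm⟩
  · exact ⟨0, (ZMod.card_filter_ne_zero v).trans (min_eq_right h).symm⟩

end minorityCount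

theorem inertia_eq_sum_minorityCount {n k : ℕ} (x : Fin k → Fin n → ZMod 2) :
    inertia x = ∑ c, minorityCount (fun i => x i c) := by
  refine le_antisymm ?_ (le_inf' _ _ fun y _ => ?_)
  · choose y hy using fun c => exists_card_filter_ne_eq_minorityCount (fun i => x i c)
    calc inertia x ≤ ∑ i, hammingDist y (x i) := inf'_le _ (mem_univ y)
      _ = ∑ c, minorityCount (fun i => x i c) := by
        rw [sum_hammingDist_eq_sum_card_ne]
        exact sum_congr rfl fun c _ => hy c
  · rw [sum_hammingDist_eq_sum_card_ne]
    exact sum_le_sum fun c _ => minorityCount_le_card_filter_ne _ (y c)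

theorem card_filter_succAbove_add_ite {m : ℕ} (p : Fin (m + 1) → Prop) [DecidablePred p]
    (i : Fin (m + 1)) :
    #{j : Fin m | p (i.succAbove j)} + (if p i then 1 else 0) = #{j | p j} := by
  simp only [card_filter]
  rw [Fin.sum_univ_succAbove _ i, add_comm]

theorem mul_min_pred_add_mul_min_pred {a b : ℕ} (hab : a ≠ b) :
    a * min (a - 1) b + b * min a (b - 1) = (a + b - 1) * min a b := by
  wlog h : a < b generalizing a b
  · simpa only [add_comm, min_comm] using this hab.symm (by omega)
  obtain ⟨d, rfl⟩ := Nat.exists_eq_add_of_lt h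
  rw [min_eq_left (by omega), min_eq_left (by omega), min_eq_left h.le]
  rcases a with _ | a
  · simp
  · rw [Nat.add_sub_cancel, show a + 1 + (a + 1 + d + 1) - 1 = a + 1 + (a + 1 + d) by omega]
    ring

theorem sum_minorityCount_succAbove {m : ℕ} (hodd : Odd (m + 1)) (v : Fin (m + 1) → ZMod 2) :
    ∑ i : Fin (m + 1), minorityCount (fun j => v (i.succAbove j)) = m * minorityCount v := by
  have hab : #{i | v i = 0} + #{i | v i = 1} = m + 1 := by
    rw [← ZMod.card_filter_ne_zero, card_filter_add_card_filter_not, card_univ, Fintype.card_fin]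
  set a := #{i | v i = 0}
  set b := #{i | v i = 1}
  have hne : a ≠ b := by
    intro h
    obtain ⟨q, hq⟩ := hodd
    omega
  have hdel : ∀ i, minorityCount (fun j => v (i.succAbove j)) =
      if v i = 0 then min (a - 1) b else min a (b - 1) := by
    intro i
    have h0 := card_filter_succAbove_add_ite (fun j => v j = 0) i
    have h1 := card_filter_succAbove_add_ite (fun j => v j = 1) i
    unfold minorityCount
    rcases ZMod.eq_zero_or_eq_one (v i) with hi | hi
    · simp only [hi, zero_ne_one, if_true, if_false] at h0 h1 ⊢
      omega
    · simp only [hi, one_ne_zero, if_true, if_false] at h0 h1 ⊢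
      omega
  calc ∑ i, minorityCount (fun j => v (i.succAbove j))
      = ∑ i, if v i = 0 then min (a - 1) b else min a (b - 1) := sum_congr rfl fun i _ => hdel i
    _ = a * min (a - 1) b + b * min a (b - 1) := by
      rw [sum_ite, sum_const, sum_const, smul_eq_mul, smul_eq_mul, ZMod.card_filter_ne_zero]
    _ = m * minorityCount v := by rw [mul_min_pred_add_mul_min_pred hne, hab]; rfl

theorem sum_inertia_deleted_eq_of_odd_general {n m : ℕ}
    (hodd : Odd (m + 1)) (x : Fin (m + 1) → Fin n → ZMod 2) :
    (∑ i : Fin (m + 1), inertia (fun j : Fin m => x (i.succAbove j))) =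
      m * inertia x := by
  simp only [inertia_eq_sum_minorityCount]
  rw [sum_comm, mul_sum]
  exact sum_congr rfl fun c _ => sum_minorityCount_succAbove hodd (fun i => x i c)

/-- For an odd number `m+1 ≥ 3` of points, the sum of the inertias of the
deleted `m`-tuples equals `m` times the inertia of the whole tuple. -/
theorem sum_inertia_deleted_eq_of_odd {n m : ℕ} (hm : 2 ≤ m)
    (hodd : Odd (m + 1)) (x : Fin (m + 1) → Fin n → ZMod 2) :
    (∑ i : Fin (m + 1), inertia (fun j : Fin m => x (i.succAbove j))) =
      m * inertia x :=
  sum_inertia_deleted_eq_of_odd_general hodd x
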